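/- arXiv:2104.09685 — 9 statements merged into one kernel-verified Lean document; each statement's English description precedes it below -/
import Mathlib

section
/- Let p > 1 and let a, b ∈ ℝ^k be vectors (k ≥ 1). Then min_{1 ≤ i ≤ k} |a_i b_i| ≤ k^{-p} · ‖a‖₁ · ‖b‖_{1/(p-1)}, where ‖b‖_{1/(p-1)} = (Σ_{i=1}^k |b_i|^{1/(p-1)})^{p-1}. -/
/-!
Put `m = minᵢ |aᵢ bᵢ|`. Then `m ^ (1/p) ≤ |aᵢ| ^ (1/p) |bᵢ| ^ (1/p)` for every `i`, so summing gives
`k m ^ (1/p) ≤ ∑ᵢ (|aᵢ| |bᵢ|) ^ (1/p)`, and Hölder's inequality for the triple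
`(1, 1/(p-1), 1/p)` (note `1 + (p - 1) = p`) bounds the right-hand side by
`(‖a‖₁ ‖b‖_{1/(p-1)}) ^ (1/p)`. Raising to the power `p` yields `k ^ p m ≤ ‖a‖₁ ‖b‖_{1/(p-1)}`.
-/

open Finset Real

lemma Real.holderTriple_one_one_div_sub_one {p : ℝ} (hp : 1 < p) :
    HolderTriple 1 (1 / (p - 1)) (1 / p) where
  inv_add_inv_eq_inv := by simp
  left_pos := one_pos
  right_pos := one_div_pos.mpr (sub_pos.mpr hp)

lemma sum_mul_rpow_one_div_le {ι : Type*} (s : Finset ι) {f g : ι → ℝ} {p : ℝ} (hp : 1 < p)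
    (hf : ∀ i ∈ s, 0 ≤ f i) (hg : ∀ i ∈ s, 0 ≤ g i) :
    ∑ i ∈ s, (f i * g i) ^ (1 / p) ≤
      ((∑ i ∈ s, f i) * (∑ i ∈ s, g i ^ (1 / (p - 1))) ^ (p - 1)) ^ (1 / p) := by
  have holder := Lr_rpow_le_Lp_mul_Lq_of_nonneg s (holderTriple_one_one_div_sub_one hp) hf hg
  have hexp : 1 / p / (1 / (p - 1)) = (p - 1) * (1 / p) := by
    rw [div_div_eq_mul_div, div_one, mul_comm]
  simp only [rpow_one, div_one, hexp] at holder
  have hG : 0 ≤ ∑ i ∈ s, g i ^ (1 / (p - 1)) := sum_nonneg fun i hi ↦ rpow_nonneg (hg i hi) _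
  rwa [mul_rpow (sum_nonneg hf) (rpow_nonneg hG _), ← rpow_mul hG]

theorem card_rpow_mul_inf'_mul_le {ι : Type*} (s : Finset ι) (hs : s.Nonempty) {f g : ι → ℝ}
    {p : ℝ} (hp : 1 < p) (hf : ∀ i ∈ s, 0 ≤ f i) (hg : ∀ i ∈ s, 0 ≤ g i) :
    (#s : ℝ) ^ p * s.inf' hs (fun i ↦ f i * g i) ≤
      (∑ i ∈ s, f i) * (∑ i ∈ s, g i ^ (1 / (p - 1))) ^ (p - 1) := by
  set m := s.inf' hs fun i ↦ f i * g i
  have hp0 : 0 < p := one_pos.trans hp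
  have hm : 0 ≤ m := le_inf' _ _ fun i hi ↦ mul_nonneg (hf i hi) (hg i hi)
  have hsum : (#s : ℝ) * m ^ (1 / p) ≤ ∑ i ∈ s, (f i * g i) ^ (1 / p) := by
    simpa using card_nsmul_le_sum s _ _ fun i hi ↦
      rpow_le_rpow hm (inf'_le (fun i ↦ f i * g i) hi) (one_div_pos.mpr hp0).le
  have hlhs : (#s : ℝ) * m ^ (1 / p) = ((#s : ℝ) ^ p * m) ^ (1 / p) := by
    rw [mul_rpow (by positivity) hm, ← rpow_mul (by positivity), mul_one_div_cancel hp0.ne',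
      rpow_one]
  rw [← rpow_le_rpow_iff (by positivity)
    (mul_nonneg (sum_nonneg hf) (rpow_nonneg (sum_nonneg fun i hi ↦ rpow_nonneg (hg i hi) _) _))
    (one_div_pos.mpr hp0), ← hlhs]
  exact hsum.trans (sum_mul_rpow_one_div_le s hp hf hg)

theorem stmt_0 (k : ℕ) (hk : 1 ≤ k) (p : ℝ) (hp : 1 < p) (a b : Fin k → ℝ) :
    (Finset.univ.inf' (Finset.univ_nonempty_iff.mpr ⟨⟨0, hk⟩⟩)
        fun i => |a i * b i|) ≤
      (k : ℝ) ^ (-p) * (∑ i, |a i|) *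
        (∑ i, |b i| ^ (1 / (p - 1))) ^ (p - 1) := by
  have h := card_rpow_mul_inf'_mul_le univ (univ_nonempty_iff.mpr ⟨⟨0, hk⟩⟩) hp
    (fun i _ ↦ abs_nonneg (a i)) (fun i _ ↦ abs_nonneg (b i))
  simp only [← abs_mul, card_univ, Fintype.card_fin] at h
  have hk0 : (0 : ℝ) < k := by exact_mod_cast hk
  rwa [rpow_neg hk0.le, mul_assoc, ← div_eq_inv_mul, le_div_iff₀' (by positivity)]
end

section
/- Define a sequence (A_k) by A_0 = 0 and A_k = A_{k-1} + a_{k-1} where a_{k-1} = (1 + √(1 + 4A_{k-1}))/2. Then for every k ≥ 1: (i) a_{k-1}² = A_k, and (ii) k²/4 ≤ A_k ≤ k². -/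
/-!
The coefficient `a = (1 + √(1 + 4A)) / 2` is the positive root of `t² = A + t`, so the recursion
gives `A_{k+1} = a_k²`, i.e. `a_k = √A_{k+1}`. Comparing `√(1 + 4A)` with `2√A` and `2√A + 1`
yields `√A_k + 1/2 ≤ √A_{k+1} ≤ √A_k + 1`, and summing from `A_0 = 0` gives `k/2 ≤ √A_k ≤ k`.
-/

namespace Real

theorem half_one_add_sqrt_sq {x : ℝ} (hx : 0 ≤ 1 + 4 * x) :
    ((1 + √(1 + 4 * x)) / 2) ^ 2 = x + (1 + √(1 + 4 * x)) / 2 := by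
  linear_combination Real.sq_sqrt hx / 4

theorem sqrt_add_half_le_half_one_add_sqrt {x : ℝ} (hx : 0 ≤ x) :
    √x + 1 / 2 ≤ (1 + √(1 + 4 * x)) / 2 := by
  have : 2 * √x ≤ √(1 + 4 * x) :=
    Real.le_sqrt_of_sq_le (by nlinarith [Real.sq_sqrt hx])
  linarith

theorem half_one_add_sqrt_le_sqrt_add_one {x : ℝ} (hx : 0 ≤ x) :
    (1 + √(1 + 4 * x)) / 2 ≤ √x + 1 := by
  have : √(1 + 4 * x) ≤ 2 * √x + 1 :=
    Real.sqrt_le_iff.mpr ⟨by positivity, by nlinarith [Real.sq_sqrt hx, Real.sqrt_nonneg x]⟩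
  linarith

end Real

namespace NesterovCoeff

variable {A a : ℕ → ℝ} (ha : ∀ k, a k = (1 + √(1 + 4 * A k)) / 2)
  (hrec : ∀ k, A (k + 1) = A k + a k)
include ha hrec

theorem nonneg (hA0 : A 0 = 0) (k : ℕ) : 0 ≤ A k := by
  induction k with
  | zero => exact hA0.ge
  | succ k ih =>
    have : 0 ≤ a k := by rw [ha k]; positivity
    linarith [hrec k]

theorem sq_eq_succ {k : ℕ} (hA : 0 ≤ A k) : a k ^ 2 = A (k + 1) := by
  rw [hrec k, ha k, Real.half_one_add_sqrt_sq (by linarith)]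

theorem eq_sqrt_succ {k : ℕ} (hA : 0 ≤ A k) : a k = √(A (k + 1)) := by
  rw [← sq_eq_succ ha hrec hA, Real.sqrt_sq (by rw [ha k]; positivity)]

theorem sqrt_bounds (hA0 : A 0 = 0) (k : ℕ) : (k : ℝ) / 2 ≤ √(A k) ∧ √(A k) ≤ k := by
  induction k with
  | zero => simp [hA0]
  | succ k ih =>
    have hA := nonneg ha hrec hA0 k
    have hlo := Real.sqrt_add_half_le_half_one_add_sqrt hA
    have hhi := Real.half_one_add_sqrt_le_sqrt_add_one hA
    rw [← ha k, eq_sqrt_succ ha hrec hA] at hlo hhi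
    push_cast
    constructor <;> linarith [ih.1, ih.2]

theorem bounds (hA0 : A 0 = 0) (k : ℕ) : (k : ℝ) ^ 2 / 4 ≤ A k ∧ A k ≤ (k : ℝ) ^ 2 := by
  obtain ⟨hlo, hhi⟩ := sqrt_bounds ha hrec hA0 k
  rw [Real.le_sqrt (by positivity) (nonneg ha hrec hA0 k)] at hlo
  rw [Real.sqrt_le_left (by positivity)] at hhi
  exact ⟨by linarith, hhi⟩

end NesterovCoeff

theorem stmt_2 (A a : ℕ → ℝ) (hA0 : A 0 = 0)
    (ha : ∀ k : ℕ, a k = (1 + Real.sqrt (1 + 4 * A k)) / 2)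
    (hrec : ∀ k : ℕ, A (k + 1) = A k + a k) :
    ∀ k : ℕ, 1 ≤ k →
      (a (k - 1)) ^ 2 = A k ∧ (k : ℝ) ^ 2 / 4 ≤ A k ∧ A k ≤ (k : ℝ) ^ 2 := by
  intro k hk
  obtain ⟨k, rfl⟩ := Nat.exists_eq_add_of_le' hk
  rw [Nat.add_sub_cancel]
  exact ⟨NesterovCoeff.sq_eq_succ ha hrec (NesterovCoeff.nonneg ha hrec hA0 k),
    NesterovCoeff.bounds ha hrec hA0 (k + 1)⟩
end

section
/- Let (λ_k)_{k≥1} be a sequence of positive reals and define A_0 = 0, τ_k = λ_k(1 + μA_{k-1}) for μ ≥ 0, a_{k-1} = (τ_{k-1} + √(τ_{k-1}² + 4τ_{k-1}A_{k-1}))/2, and A_k = A_{k-1} + a_{k-1}. Then for every k ≥ 1, A_k ≥ (1/4)(Σ_{i=1}^{k} √λ_{i-1})², where λ_0 := λ_1. -/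
/-!
The step size `a = (τ + √(τ² + 4τA)) / 2` satisfies `a ≥ τ/2 + √(τA)`, because
`√(τ² + 4τA) ≥ √(4τA)`. Hence `(√A + √τ/2)² = A + √(τA) + τ/4 ≤ A + a`: the square root of the
accumulated step sizes grows by at least `√τ_k / 2 ≥ √λ_{k+1} / 2` per step. The first step is
exact, `A₁ = τ₀ = λ₁ = (√λ₀ + √λ₁)² / 4`, and summing the increments gives
`√A_k ≥ (1/2) ∑_{i ≤ k} √λ_i`, one term more than needed.
-/

open Real Finset

lemma half_add_sqrt_mul_le {t A : ℝ} (ht : 0 ≤ t) (hA : 0 ≤ A) :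
    t / 2 + √(t * A) ≤ (t + √(t ^ 2 + 4 * t * A)) / 2 := by
  have : 2 * √(t * A) ≤ √(t ^ 2 + 4 * t * A) := by
    apply le_sqrt_of_sq_le
    nlinarith [sq_sqrt (mul_nonneg ht hA)]
  linarith

lemma sqrt_add_sqrt_div_two_le_sqrt_add {A t a : ℝ} (hA : 0 ≤ A) (ht : 0 ≤ t)
    (ha : t / 2 + √(t * A) ≤ a) : √A + √t / 2 ≤ √(A + a) := by
  apply le_sqrt_of_sq_le
  have : √t * √A = √(t * A) := (sqrt_mul ht A).symm
  nlinarith [sq_sqrt hA, sq_sqrt ht]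

section AddRootRecursion

variable {A τ lam : ℕ → ℝ}

lemma nonneg_of_add_root_rec
    (hrec : ∀ k, A (k + 1) = A k + (τ k + √(τ k ^ 2 + 4 * τ k * A k)) / 2)
    (hA0 : A 0 = 0) (hτ : ∀ k, 0 ≤ A k → 0 ≤ τ k) (k : ℕ) :
    0 ≤ A k := by
  induction k with
  | zero => exact hA0.ge
  | succ n ih =>
    rw [hrec]
    have := sqrt_nonneg (τ n ^ 2 + 4 * τ n * A n)
    linarith [hτ n ih]

lemma half_sum_sqrt_le_sqrt_of_add_root_rec
    (hrec : ∀ k, A (k + 1) = A k + (τ k + √(τ k ^ 2 + 4 * τ k * A k)) / 2)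
    (hA0 : A 0 = 0) (hA : ∀ k, 0 ≤ A k)
    (hlam : ∀ k, 0 ≤ lam (k + 1)) (hlam0 : lam 0 = lam 1) (hτ0 : τ 0 = lam 1)
    (hlam_le_τ : ∀ k, lam (k + 1) ≤ τ k) {k : ℕ} (hk : 1 ≤ k) :
    (1 / 2) * ∑ i ∈ range (k + 1), √(lam i) ≤ √(A k) := by
  induction k, hk using Nat.le_induction with
  | base =>
    have hA1 : A 1 = lam 1 := by
      rw [hrec, hA0, hτ0, mul_zero, add_zero, sqrt_sq (hlam 0)]
      ring
    rw [hA1, sum_range_succ, sum_range_one, hlam0]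
    linarith
  | succ n _ ih =>
    have hτ : 0 ≤ τ n := (hlam n).trans (hlam_le_τ n)
    have hstep := sqrt_add_sqrt_div_two_le_sqrt_add (hA n) hτ (half_add_sqrt_mul_le hτ (hA n))
    have := sqrt_le_sqrt (hlam_le_τ n)
    rw [sum_range_succ, hrec]
    linarith

end AddRootRecursion

theorem stmt_3 (lam : ℕ → ℝ) (hlam : ∀ k : ℕ, 1 ≤ k → 0 < lam k)
    (hlam0 : lam 0 = lam 1) (μ : ℝ) (hμ : 0 ≤ μ)
    (A τ a : ℕ → ℝ) (hA0 : A 0 = 0)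
    (hτ : ∀ k : ℕ, τ k = lam (k + 1) * (1 + μ * A k))
    (ha : ∀ k : ℕ, a k = (τ k + Real.sqrt ((τ k) ^ 2 + 4 * τ k * A k)) / 2)
    (hA : ∀ k : ℕ, A (k + 1) = A k + a k) :
    ∀ k : ℕ, 1 ≤ k →
      (1 / 4) * (∑ i ∈ Finset.range k, Real.sqrt (lam i)) ^ 2 ≤ A k := by
  have hrec k : A (k + 1) = A k + (τ k + √(τ k ^ 2 + 4 * τ k * A k)) / 2 := by rw [hA, ha]
  have hlam_pos k : 0 < lam (k + 1) := hlam (k + 1) k.succ_pos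
  have hlam_le_τ k (hAk : 0 ≤ A k) : lam (k + 1) ≤ τ k := by
    rw [hτ]
    nlinarith [hlam_pos k, mul_nonneg hμ hAk]
  have hA_nonneg := nonneg_of_add_root_rec hrec hA0 fun k hAk =>
    (hlam_pos k).le.trans (hlam_le_τ k hAk)
  intro k hk
  have hsum : (1 / 2) * ∑ i ∈ range k, √(lam i) ≤ √(A k) := by
    refine le_trans ?_ (half_sum_sqrt_le_sqrt_of_add_root_rec hrec hA0 hA_nonneg
      (fun k => (hlam_pos k).le) hlam0 (by rw [hτ, hA0]; ring)
      (fun k => hlam_le_τ k (hA_nonneg k)) hk)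
    rw [sum_range_succ]
    linarith [sqrt_nonneg (lam k)]
  calc (1 / 4) * (∑ i ∈ range k, √(lam i)) ^ 2
      = ((1 / 2) * ∑ i ∈ range k, √(lam i)) ^ 2 := by ring
    _ ≤ A k := (le_sqrt (by positivity) (hA_nonneg k)).mp hsum
end

section
/- Let ψ : Z → (-∞, ∞] be a proper lower semicontinuous convex function on a finite-dimensional real inner product space, (λ_k)_{k≥1} positive reals, and define z_k = argmin_u {λ_k ψ(u) + (1/2)‖u − z_{k-1}‖²} and v_k = (z_{k-1} − z_k)/λ_k for k ≥ 1, starting from z_0 with ψ(z_0) < ∞. Then for every k ≥ 1, min_{1 ≤ i ≤ k} ‖v_i‖² ≤ (ψ(z_0) − ψ(z_k)) / (Σ_{i=1}^k λ_i). -/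
/-!
Convexity of `ψ` makes each prox step a sufficient decrease,
`ψ(z_k) + λ_k ‖v_k‖² ≤ ψ(z_{k-1})`. Summing telescopes to
`∑ λ_i ‖v_i‖² ≤ ψ(z₀) - ψ(z_k)`, and the minimum of the `‖v_i‖²` is at most their
`λ`-weighted average.
-/

open Filter Topology Set

/-- `y = prox_{lam ψ}(x)`. -/
def IsProxPoint {Z : Type*} [NormedAddCommGroup Z] (ψ : Z → EReal) (lam : ℝ) (x y : Z) :
    Prop :=
  ∀ u, (lam : EReal) * ψ y + ((1 / 2 * ‖y - x‖ ^ 2 : ℝ) : EReal) ≤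
    (lam : EReal) * ψ u + ((1 / 2 * ‖u - x‖ ^ 2 : ℝ) : EReal)

namespace IsProxPoint

variable {Z : Type*} [NormedAddCommGroup Z] {ψ : Z → EReal} {lam : ℝ} {x y : Z}

theorem ne_top (h : IsProxPoint ψ lam x y) (hlam : 0 < lam) (hx : ψ x ≠ ⊤) : ψ y ≠ ⊤ := by
  intro hy
  have hfin : (lam : EReal) * ψ x + ((1 / 2 * ‖x - x‖ ^ 2 : ℝ) : EReal) ≠ ⊤ :=
    EReal.add_ne_top ((EReal.mul_ne_top _ _).2 (by simp [hx, hlam.le])) (EReal.coe_ne_top _)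
  have := h x
  rw [hy, EReal.coe_mul_top_of_pos hlam, EReal.top_add_of_ne_bot (EReal.coe_ne_bot _)] at this
  exact hfin (top_le_iff.mp this)

variable [NormedSpace ℝ Z]

/-- The prox objective is strongly convex, so comparing with the points of the segment `[y, x]`
near `y` gains the full `‖y - x‖²`, not only the `‖y - x‖² / 2` obtained from `u = x`. -/
theorem sq_norm_sub_le (h : IsProxPoint ψ lam x y) (hlam : 0 < lam) (hx : ψ x ≠ ⊤)
    (hxbot : ψ x ≠ ⊥) (hybot : ψ y ≠ ⊥)
    (hconv : ∀ t : ℝ, 0 ≤ t → t ≤ 1 →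
      ψ (t • x + (1 - t) • y) ≤ (t : EReal) * ψ x + ((1 - t : ℝ) : EReal) * ψ y) :
    ‖y - x‖ ^ 2 ≤ lam * ((ψ x).toReal - (ψ y).toReal) := by
  set a := (ψ x).toReal
  set b := (ψ y).toReal
  have hxa : ψ x = a := (EReal.coe_toReal hx hxbot).symm
  have hyb : ψ y = b := (EReal.coe_toReal (h.ne_top hlam hx) hybot).symm
  have hseg : ∀ t ∈ Ioc (0 : ℝ) 1, ‖y - x‖ ^ 2 * (1 - t / 2) ≤ lam * (a - b) := by
    rintro t ⟨ht0, ht1⟩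
    have hdist : ‖(t • x + (1 - t) • y) - x‖ = (1 - t) * ‖y - x‖ := by
      rw [show t • x + (1 - t) • y - x = (1 - t) • (y - x) by module, norm_smul,
        Real.norm_of_nonneg (by linarith)]
    have hψu : ψ (t • x + (1 - t) • y) ≤ ((t * a + (1 - t) * b : ℝ) : EReal) := by
      simpa [hxa, hyb] using hconv t ht0.le ht1
    have hcmp := (h (t • x + (1 - t) • y)).trans
      (add_le_add_left (mul_le_mul_of_nonneg_left hψu (EReal.coe_nonneg.2 hlam.le)) _)
    rw [hyb, hdist] at hcmp
    have key : lam * b + 1 / 2 * ‖y - x‖ ^ 2 ≤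
        lam * (t * a + (1 - t) * b) + 1 / 2 * ((1 - t) * ‖y - x‖) ^ 2 := by
      exact_mod_cast hcmp
    exact le_of_mul_le_mul_left (by linear_combination key) ht0
  have hlim : Tendsto (fun t : ℝ => ‖y - x‖ ^ 2 * (1 - t / 2)) (𝓝[>] 0) (𝓝 (‖y - x‖ ^ 2)) :=
    ((by fun_prop : Continuous fun t : ℝ => ‖y - x‖ ^ 2 * (1 - t / 2)).tendsto' 0 _
      (by simp)).mono_left nhdsWithin_le_nhds
  exact le_of_tendsto hlim (mem_of_superset (Ioc_mem_nhdsGT one_pos) hseg)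

theorem toReal_add_mul_norm_sq_le (h : IsProxPoint ψ lam x y) (hlam : 0 < lam) (hx : ψ x ≠ ⊤)
    (hxbot : ψ x ≠ ⊥) (hybot : ψ y ≠ ⊥)
    (hconv : ∀ t : ℝ, 0 ≤ t → t ≤ 1 →
      ψ (t • x + (1 - t) • y) ≤ (t : EReal) * ψ x + ((1 - t : ℝ) : EReal) * ψ y) :
    (ψ y).toReal + lam * ‖lam⁻¹ • (x - y)‖ ^ 2 ≤ (ψ x).toReal := by
  have hsq := h.sq_norm_sub_le hlam hx hxbot hybot hconv
  have hv : lam * ‖lam⁻¹ • (x - y)‖ ^ 2 = ‖y - x‖ ^ 2 / lam := by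
    rw [norm_smul, Real.norm_of_nonneg (inv_nonneg.2 hlam.le), norm_sub_rev]
    field_simp
  rw [hv]
  linarith [(div_le_iff₀' hlam).2 hsq]

end IsProxPoint

theorem Finset.inf'_mul_sum_le_sum_mul {ι : Type*} {s : Finset ι} (hs : s.Nonempty)
    (w c : ι → ℝ) (hc : ∀ i ∈ s, 0 ≤ c i) :
    s.inf' hs w * ∑ i ∈ s, c i ≤ ∑ i ∈ s, c i * w i := by
  rw [Finset.mul_sum]
  exact Finset.sum_le_sum fun i hi => by
    rw [mul_comm]; exact mul_le_mul_of_nonneg_left (Finset.inf'_le w hi) (hc i hi)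

theorem add_sum_Icc_le_of_forall_add_le {F g : ℕ → ℝ} (h : ∀ n, F (n + 1) + g (n + 1) ≤ F n)
    (k : ℕ) : F k + ∑ i ∈ Finset.Icc 1 k, g i ≤ F 0 := by
  induction k with
  | zero => simp
  | succ n ih =>
    rw [Finset.sum_Icc_succ_top (Nat.le_add_left 1 n)]
    linarith [h n]

theorem stmt_5_general {Z : Type*} [NormedAddCommGroup Z] [InnerProductSpace ℝ Z]
    (ψ : Z → EReal) (hbot : ∀ x, ψ x ≠ ⊥)
    (hconv : ∀ x y : Z, ∀ t : ℝ, 0 ≤ t → t ≤ 1 →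
      ψ (t • x + (1 - t) • y) ≤ (t : EReal) * ψ x + ((1 - t : ℝ) : EReal) * ψ y)
    (lam : ℕ → ℝ) (hlam : ∀ k : ℕ, 1 ≤ k → 0 < lam k)
    (zseq v : ℕ → Z) (h0 : ψ (zseq 0) ≠ ⊤)
    (hmin : ∀ k : ℕ, ∀ u,
      (lam (k + 1) : EReal) * ψ (zseq (k + 1)) +
          ((1 / 2 * ‖zseq (k + 1) - zseq k‖ ^ 2 : ℝ) : EReal) ≤
        (lam (k + 1) : EReal) * ψ u + ((1 / 2 * ‖u - zseq k‖ ^ 2 : ℝ) : EReal))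
    (hv : ∀ k : ℕ, v (k + 1) = (lam (k + 1))⁻¹ • (zseq k - zseq (k + 1))) :
    ∀ k : ℕ, ∀ hk : 1 ≤ k,
      ((((Finset.Icc 1 k).inf' (Finset.nonempty_Icc.mpr hk) fun i => ‖v i‖ ^ 2) *
          ∑ i ∈ Finset.Icc 1 k, lam i : ℝ) : EReal) + ψ (zseq k) ≤ ψ (zseq 0) := by
  intro k hk
  have hprox (n : ℕ) : IsProxPoint ψ (lam (n + 1)) (zseq n) (zseq (n + 1)) := hmin n
  have hpos (n : ℕ) : 0 < lam (n + 1) := hlam _ n.succ_pos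
  have hfinite (n : ℕ) : ψ (zseq n) ≠ ⊤ := by
    induction n with
    | zero => exact h0
    | succ n ih => exact (hprox n).ne_top (hpos n) ih
  have hdescent (n : ℕ) :
      (ψ (zseq (n + 1))).toReal + lam (n + 1) * ‖v (n + 1)‖ ^ 2 ≤ (ψ (zseq n)).toReal := by
    rw [hv n]
    exact (hprox n).toReal_add_mul_norm_sq_le (hpos n) (hfinite n) (hbot _) (hbot _)
      (hconv _ _)
  have htelescope := add_sum_Icc_le_of_forall_add_le
    (F := fun n => (ψ (zseq n)).toReal) (g := fun n => lam n * ‖v n‖ ^ 2) hdescent k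
  have hinf := (Finset.Icc 1 k).inf'_mul_sum_le_sum_mul (Finset.nonempty_Icc.mpr hk)
    (fun i => ‖v i‖ ^ 2) lam fun i hi => (hlam i (Finset.mem_Icc.mp hi).1).le
  rw [← EReal.coe_toReal (hfinite k) (hbot _), ← EReal.coe_toReal h0 (hbot _),
    ← EReal.coe_add, EReal.coe_le_coe_iff]
  linarith

/-- Global convergence rate of the exact proximal point method: for every `k ≥ 1`,
`min_{1 ≤ i ≤ k} ‖v_i‖² ≤ (ψ(z₀) − ψ(z_k)) / (∑_{i=1}^k λ_i)`, stated in the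
equivalent product form valid for extended-real-valued `ψ`. -/
theorem stmt_5 {Z : Type*} [NormedAddCommGroup Z] [InnerProductSpace ℝ Z]
    [FiniteDimensional ℝ Z]
    (ψ : Z → EReal) (hbot : ∀ x, ψ x ≠ ⊥) (hfin : ∃ x, ψ x ≠ ⊤)
    (hlsc : LowerSemicontinuous ψ)
    (hconv : ∀ x y : Z, ∀ t : ℝ, 0 ≤ t → t ≤ 1 →
      ψ (t • x + (1 - t) • y) ≤ (t : EReal) * ψ x + ((1 - t : ℝ) : EReal) * ψ y)
    (lam : ℕ → ℝ) (hlam : ∀ k : ℕ, 1 ≤ k → 0 < lam k)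
    (zseq v : ℕ → Z) (h0 : ψ (zseq 0) ≠ ⊤)
    (hmin : ∀ k : ℕ, ∀ u,
      (lam (k + 1) : EReal) * ψ (zseq (k + 1)) +
          ((1 / 2 * ‖zseq (k + 1) - zseq k‖ ^ 2 : ℝ) : EReal) ≤
        (lam (k + 1) : EReal) * ψ u + ((1 / 2 * ‖u - zseq k‖ ^ 2 : ℝ) : EReal))
    (hv : ∀ k : ℕ, v (k + 1) = (lam (k + 1))⁻¹ • (zseq k - zseq (k + 1))) :
    ∀ k : ℕ, ∀ hk : 1 ≤ k,
      ((((Finset.Icc 1 k).inf' (Finset.nonempty_Icc.mpr hk) fun i => ‖v i‖ ^ 2) *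
          ∑ i ∈ Finset.Icc 1 k, lam i : ℝ) : EReal) + ψ (zseq k) ≤ ψ (zseq 0) :=
  stmt_5_general ψ hbot hconv lam hlam zseq v h0 hmin hv
end

section
/- Let φ : Z → (-∞, ∞] be proper, let λ > 0, σ ∈ (0,1), z⁻ ∈ Z, and suppose (z, ṽ, ε̃) ∈ Z × Z × ℝ₊ satisfies ṽ ∈ ∂_{ε̃}(λφ + (1/2)‖·−z⁻‖²)(z) and ‖ṽ‖² + 2ε̃ ≤ σ‖z⁻ − z + ṽ‖². Then (1/λ)‖z⁻ − z + ṽ‖² ≤ 2(φ(z⁻) − φ(z))/(1 − σ). -/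
/-!
Test the ε-subgradient inequality at `u = z⁻`. Since `½‖w‖² + ⟪ṽ, w⟫ = ½(‖w + ṽ‖² - ‖ṽ‖²)` for
`w = z⁻ - z`, the relative error condition `‖ṽ‖² + 2ε̃ ≤ σ‖w + ṽ‖²` turns the resulting inequality
`λ φ(z) + ½‖w‖² + ⟪ṽ, w⟫ - ε̃ ≤ λ φ(z⁻)` into `λ φ(z) + (1 - σ)/2 ‖w + ṽ‖² ≤ λ φ(z⁻)`.
-/

open scoped RealInnerProductSpace

theorem EReal.coe_div_add_le_of_mul_add_le {lam c : ℝ} (hlam : 0 < lam) {x y : EReal}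
    (h : (lam : EReal) * x + c ≤ lam * y) : ((c / lam : ℝ) : EReal) + x ≤ y := by
  induction y using EReal.rec with
  | top => exact le_top
  | bot =>
    rw [EReal.coe_mul_bot_of_pos hlam, le_bot_iff, EReal.add_eq_bot_iff] at h
    obtain rfl : x = ⊥ := by simpa [EReal.mul_eq_bot, hlam, hlam.not_gt] using h
    simp
  | coe b =>
    induction x using EReal.rec with
    | bot => simp
    | top =>
      rw [EReal.coe_mul_top_of_pos hlam, EReal.top_add_coe, top_le_iff] at h
      exact absurd h (EReal.coe_ne_top _)
    | coe a =>
      have hab : lam * a + c ≤ lam * b := by exact_mod_cast h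
      have : c / lam + a ≤ b := by
        rw [div_add' _ _ _ hlam.ne', div_le_iff₀ hlam]
        linarith
      exact_mod_cast this

theorem one_sub_mul_norm_add_sq_le_of_relative_error {Z : Type*} [NormedAddCommGroup Z]
    [InnerProductSpace ℝ Z] {w v : Z} {σ ε : ℝ} (hrel : ‖v‖ ^ 2 + 2 * ε ≤ σ * ‖w + v‖ ^ 2) :
    (1 - σ) / 2 * ‖w + v‖ ^ 2 ≤ 1 / 2 * ‖w‖ ^ 2 + ⟪v, w⟫ - ε := by
  have hexpand : ‖w + v‖ ^ 2 = ‖w‖ ^ 2 + 2 * ⟪v, w⟫ + ‖v‖ ^ 2 := by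
    rw [norm_add_sq_real, real_inner_comm]
  linarith

theorem stmt_6_general {Z : Type*} [NormedAddCommGroup Z] [InnerProductSpace ℝ Z]
    (φ : Z → EReal)
    (lam σ : ℝ) (hlam : 0 < lam)
    (zm z vt : Z) (εt : ℝ)
    (hincl : ∀ u, (lam : EReal) * φ z +
        ((1 / 2 * ‖z - zm‖ ^ 2 + ⟪vt, u - z⟫ - εt : ℝ) : EReal) ≤
      (lam : EReal) * φ u + ((1 / 2 * ‖u - zm‖ ^ 2 : ℝ) : EReal))
    (hrel : ‖vt‖ ^ 2 + 2 * εt ≤ σ * ‖zm - z + vt‖ ^ 2) :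
    (((1 - σ) / (2 * lam) * ‖zm - z + vt‖ ^ 2 : ℝ) : EReal) + φ z ≤ φ zm := by
  have hdescent := hincl zm
  rw [sub_self, norm_zero, zero_pow two_ne_zero, mul_zero, EReal.coe_zero, add_zero] at hdescent
  refine le_trans ?_ (EReal.coe_div_add_le_of_mul_add_le hlam hdescent)
  gcongr
  have hreal := one_sub_mul_norm_add_sq_le_of_relative_error (w := zm - z) hrel
  rw [norm_sub_rev zm z] at hreal
  calc (1 - σ) / (2 * lam) * ‖zm - z + vt‖ ^ 2 = (1 - σ) / 2 * ‖zm - z + vt‖ ^ 2 / lam := by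
        field_simp
    _ ≤ _ := div_le_div_of_nonneg_right hreal hlam.le

/-- Descent property of the general inexact proximal point framework. -/
theorem stmt_6 {Z : Type*} [NormedAddCommGroup Z] [InnerProductSpace ℝ Z]
    (φ : Z → EReal) (hbot : ∀ x, φ x ≠ ⊥) (hfin : ∃ x, φ x ≠ ⊤)
    (lam σ : ℝ) (hlam : 0 < lam) (hσ0 : 0 < σ) (hσ1 : σ < 1)
    (zm z vt : Z) (εt : ℝ) (hεt : 0 ≤ εt)
    (hincl : ∀ u, (lam : EReal) * φ z +
        ((1 / 2 * ‖z - zm‖ ^ 2 + ⟪vt, u - z⟫ - εt : ℝ) : EReal) ≤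
      (lam : EReal) * φ u + ((1 / 2 * ‖u - zm‖ ^ 2 : ℝ) : EReal))
    (hrel : ‖vt‖ ^ 2 + 2 * εt ≤ σ * ‖zm - z + vt‖ ^ 2) :
    (((1 - σ) / (2 * lam) * ‖zm - z + vt‖ ^ 2 : ℝ) : EReal) + φ z ≤ φ zm :=
  stmt_6_general φ lam σ hlam zm z vt εt hincl hrel
end

section
/- Let φ : Z → (-∞, ∞] be proper, let λ > 0, σ ∈ (0,1), z⁻ ∈ Z, and suppose (z, ṽ, ε̃) satisfies ṽ ∈ ∂_{ε̃}(λφ + (1/2)‖·−z⁻‖²)(z) and ‖ṽ‖² + 2ε̃ ≤ σ‖z⁻ − z + ṽ‖². Then for every u ∈ Z, φ(z) ≤ φ(u) + ‖z⁻ − u‖²/(2(1−σ)λ). -/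
open scoped RealInnerProductSpace

/-! The ε-subgradient inequality at `u` bounds `λ (φ z - φ u)` by the gap
`½‖u - z⁻‖² - ½‖z - z⁻‖² - ⟪ṽ, u - z⟫ + ε̃ = ½‖p‖² - ⟪ṽ, p⟫ - ½ (‖w‖² - ‖ṽ‖² - 2ε̃)`,
where `p = u - z⁻` and `w = z⁻ - z + ṽ`. The relative error criterion makes the last bracket at
least `(1 - σ)‖w‖²` and gives `‖ṽ‖² ≤ σ‖w‖²`, so Young's inequality absorbs `⟪ṽ, p⟫` into
`(1 - σ)/2 ‖w‖² + σ/(2(1 - σ)) ‖p‖²`, which leaves `‖p‖² / (2(1 - σ))`. -/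

theorem EReal.le_add_div_of_mul_add_le {lam : ℝ} (hlam : 0 < lam) {x y : EReal} {a b : ℝ}
    (h : (lam : EReal) * x + a ≤ lam * y + b) : x ≤ y + ((b - a) / lam : ℝ) := by
  induction x using EReal.rec with
  | bot => exact bot_le
  | top =>
    induction y using EReal.rec with
    | bot =>
      simp only [EReal.mul_top_of_pos (EReal.coe_pos.2 hlam),
        EReal.mul_bot_of_pos (EReal.coe_pos.2 hlam), EReal.top_add_coe, EReal.bot_add,
        top_le_iff] at h
      exact absurd h bot_ne_top
    | top => simp
    | coe y =>
      simp only [EReal.mul_top_of_pos (EReal.coe_pos.2 hlam), EReal.top_add_coe, top_le_iff] at h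
      exact absurd h (mod_cast EReal.coe_ne_top _)
  | coe x =>
    induction y using EReal.rec with
    | bot =>
      simp only [EReal.mul_bot_of_pos (EReal.coe_pos.2 hlam), EReal.bot_add, le_bot_iff] at h
      exact absurd h (mod_cast EReal.coe_ne_bot _)
    | top => simp
    | coe y =>
      norm_cast at h ⊢
      rw [← sub_le_iff_le_add', le_div_iff₀ hlam]
      linarith

theorem mul_le_of_sq_le_mul_sq {σ A B W : ℝ} (hσ0 : 0 ≤ σ) (hσ1 : σ < 1)
    (h : A ^ 2 ≤ σ * W ^ 2) : A * B ≤ (1 - σ) / 2 * W ^ 2 + σ / (2 * (1 - σ)) * B ^ 2 := by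
  have hσ : 0 < 1 - σ := by linarith
  -- squared, this is `4xy ≤ (x + y)²` for `x = (1 - σ)² W²` and `y = σ B²`
  have hsq : 2 * (1 - σ) * (A * B) ≤ (1 - σ) ^ 2 * W ^ 2 + σ * B ^ 2 := by
    refine (abs_le_of_sq_le_sq' ?_ (by positivity)).2
    nlinarith [sq_nonneg ((1 - σ) ^ 2 * W ^ 2 - σ * B ^ 2),
      mul_le_mul_of_nonneg_left h (by positivity : 0 ≤ 4 * (1 - σ) ^ 2 * B ^ 2)]
  rw [div_mul_eq_mul_div, div_mul_eq_mul_div, div_add_div _ _ (by norm_num) (by positivity),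
    le_div_iff₀ (by positivity)]
  nlinarith

theorem inexact_prox_gap_le {Z : Type*} [NormedAddCommGroup Z] [InnerProductSpace ℝ Z]
    {σ ε : ℝ} (hσ0 : 0 ≤ σ) (hσ1 : σ < 1) (hε : 0 ≤ ε) {zm z v : Z}
    (hrel : ‖v‖ ^ 2 + 2 * ε ≤ σ * ‖zm - z + v‖ ^ 2) (u : Z) :
    1 / 2 * ‖u - zm‖ ^ 2 - (1 / 2 * ‖z - zm‖ ^ 2 + ⟪v, u - z⟫ - ε) ≤
      ‖zm - u‖ ^ 2 / (2 * (1 - σ)) := by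
  rw [norm_sub_rev zm u]
  set p := u - zm with hp
  set w := zm - z + v with hw
  have hz : z - zm = v - w := by rw [hw]; abel
  have hu : u - z = p + (w - v) := by rw [hp, hw]; abel
  clear_value p w
  have hgap : 1 / 2 * ‖p‖ ^ 2 - (1 / 2 * ‖z - zm‖ ^ 2 + ⟪v, u - z⟫ - ε) =
      1 / 2 * ‖p‖ ^ 2 - ⟪v, p⟫ - 1 / 2 * (‖w‖ ^ 2 - ‖v‖ ^ 2 - 2 * ε) := by
    rw [hz, hu, inner_add_right, inner_sub_right, real_inner_self_eq_norm_sq,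
      norm_sub_sq_real, real_inner_comm]
    ring
  have hinner : -⟪v, p⟫ ≤ ‖v‖ * ‖p‖ := by
    rw [← inner_neg_left, ← norm_neg v]; exact real_inner_le_norm _ _
  have hyoung := mul_le_of_sq_le_mul_sq (B := ‖p‖) hσ0 hσ1 (by linarith : ‖v‖ ^ 2 ≤ σ * ‖w‖ ^ 2)
  have hsplit : ‖p‖ ^ 2 / (2 * (1 - σ)) = 1 / 2 * ‖p‖ ^ 2 + σ / (2 * (1 - σ)) * ‖p‖ ^ 2 := by
    field_simp [(by linarith : (1 : ℝ) - σ ≠ 0)]; ring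
  rw [hgap, hsplit]
  linarith

theorem stmt_7_general {Z : Type*} [NormedAddCommGroup Z] [InnerProductSpace ℝ Z]
    (φ : Z → EReal)
    (lam σ : ℝ) (hlam : 0 < lam) (hσ0 : 0 < σ) (hσ1 : σ < 1)
    (zm z vt : Z) (εt : ℝ) (hεt : 0 ≤ εt)
    (hincl : ∀ u, (lam : EReal) * φ z +
        ((1 / 2 * ‖z - zm‖ ^ 2 + ⟪vt, u - z⟫ - εt : ℝ) : EReal) ≤
      (lam : EReal) * φ u + ((1 / 2 * ‖u - zm‖ ^ 2 : ℝ) : EReal))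
    (hrel : ‖vt‖ ^ 2 + 2 * εt ≤ σ * ‖zm - z + vt‖ ^ 2) :
    ∀ u, φ z ≤ φ u + ((‖zm - u‖ ^ 2 / (2 * (1 - σ) * lam) : ℝ) : EReal) := by
  intro u
  have hgap : (1 / 2 * ‖u - zm‖ ^ 2 - (1 / 2 * ‖z - zm‖ ^ 2 + ⟪vt, u - z⟫ - εt)) / lam ≤
      ‖zm - u‖ ^ 2 / (2 * (1 - σ) * lam) := by
    rw [← div_div]
    exact div_le_div_of_nonneg_right (inexact_prox_gap_le hσ0.le hσ1 hεt hrel u) hlam.le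
  calc φ z
      ≤ φ u + (((1 / 2 * ‖u - zm‖ ^ 2 - (1 / 2 * ‖z - zm‖ ^ 2 + ⟪vt, u - z⟫ - εt)) / lam : ℝ) :
        EReal) := EReal.le_add_div_of_mul_add_le hlam (hincl u)
    _ ≤ _ := by gcongr

/-- Approximate-optimality property of an inexact proximal point step. -/
theorem stmt_7 {Z : Type*} [NormedAddCommGroup Z] [InnerProductSpace ℝ Z]
    (φ : Z → EReal) (hbot : ∀ x, φ x ≠ ⊥) (hfin : ∃ x, φ x ≠ ⊤)
    (lam σ : ℝ) (hlam : 0 < lam) (hσ0 : 0 < σ) (hσ1 : σ < 1)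
    (zm z vt : Z) (εt : ℝ) (hεt : 0 ≤ εt)
    (hincl : ∀ u, (lam : EReal) * φ z +
        ((1 / 2 * ‖z - zm‖ ^ 2 + ⟪vt, u - z⟫ - εt : ℝ) : EReal) ≤
      (lam : EReal) * φ u + ((1 / 2 * ‖u - zm‖ ^ 2 : ℝ) : EReal))
    (hrel : ‖vt‖ ^ 2 + 2 * εt ≤ σ * ‖zm - z + vt‖ ^ 2) :
    ∀ u, φ z ≤ φ u + ((‖zm - u‖ ^ 2 / (2 * (1 - σ) * lam) : ℝ) : EReal) :=
  stmt_7_general φ lam σ hlam hσ0 hσ1 zm z vt εt hεt hincl hrel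
end

section
/- Let C be a nonempty closed convex subset of a finite-dimensional real inner product space. Then inf_{‖d‖ ≤ 1} σ_C(d) = −min_{u ∈ C} ‖u‖, where σ_C(d) := sup_{u ∈ C} ⟨u, d⟩ is the support function of C. -/
/-!
Let `u₀` be the projection of `0` onto `C`; the variational inequality of the projection reads
`‖u₀‖² ≤ ⟪u₀, u⟫` for all `u ∈ C`. Testing against the unit direction `d = -u₀ / ‖u₀‖` gives
`σ_C(d) ≤ -‖u₀‖`, while for every `‖d‖ ≤ 1` Cauchy–Schwarz gives `σ_C(d) ≥ ⟪u₀, d⟫ ≥ -‖u₀‖`.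
-/

open scoped RealInnerProductSpace

section SupportFunction

variable {E : Type*} [NormedAddCommGroup E] [InnerProductSpace ℝ E]

theorem exists_mem_sq_norm_le_inner_of_isComplete {C : Set E} (hne : C.Nonempty)
    (hcomplete : IsComplete C) (hconv : Convex ℝ C) :
    ∃ u₀ ∈ C, ∀ u ∈ C, ‖u₀‖ ^ 2 ≤ ⟪u₀, u⟫ := by
  obtain ⟨u₀, hu₀, hproj⟩ := exists_norm_eq_iInf_of_complete_convex hne hcomplete hconv 0
  refine ⟨u₀, hu₀, fun u hu => ?_⟩
  have h := (norm_eq_iInf_iff_real_inner_le_zero hconv hu₀).1 hproj u hu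
  rw [zero_sub, inner_neg_left, inner_sub_right, real_inner_self_eq_norm_sq] at h
  linarith

theorem norm_le_of_sq_norm_le_inner {u₀ u : E} (h : ‖u₀‖ ^ 2 ≤ ⟪u₀, u⟫) : ‖u₀‖ ≤ ‖u‖ := by
  nlinarith [real_inner_le_norm u₀ u, norm_nonneg u₀, norm_nonneg u]

theorem neg_norm_le_iInf_closedBall_iSup_inner {C : Set E} {u₀ : E} (hu₀ : u₀ ∈ C) :
    ((-‖u₀‖ : ℝ) : EReal) ≤ ⨅ d ∈ Metric.closedBall (0 : E) 1, ⨆ u ∈ C, ((⟪u, d⟫ : ℝ) : EReal) := by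
  refine le_iInf₂ fun d hd => le_iSup₂_of_le u₀ hu₀ (EReal.coe_le_coe_iff.2 ?_)
  have hd : ‖d‖ ≤ 1 := mem_closedBall_zero_iff.1 hd
  exact neg_le_of_abs_le <|
    (abs_real_inner_le_norm u₀ d).trans (mul_le_of_le_one_right (norm_nonneg u₀) hd)

theorem iInf_closedBall_iSup_inner_le_neg_norm {C : Set E} {u₀ : E}
    (hvar : ∀ u ∈ C, ‖u₀‖ ^ 2 ≤ ⟪u₀, u⟫) :
    ⨅ d ∈ Metric.closedBall (0 : E) 1, ⨆ u ∈ C, ((⟪u, d⟫ : ℝ) : EReal) ≤ ((-‖u₀‖ : ℝ) : EReal) := by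
  -- `‖0‖⁻¹ = 0`, so for `u₀ = 0` this is `d = 0` and no case split is needed
  set d : E := -(‖u₀‖⁻¹ • u₀)
  have hd : d ∈ Metric.closedBall (0 : E) 1 := by
    rw [mem_closedBall_zero_iff, norm_neg, norm_smul, norm_inv, norm_norm]
    exact inv_mul_le_one_of_le₀ le_rfl (norm_nonneg u₀)
  refine iInf₂_le_of_le d hd (iSup₂_le fun u hu => EReal.coe_le_coe_iff.2 ?_)
  calc ⟪u, d⟫ = -(‖u₀‖⁻¹ * ⟪u₀, u⟫) := by
        rw [inner_neg_right, inner_smul_right, real_inner_comm]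
    _ ≤ -(‖u₀‖⁻¹ * ‖u₀‖ ^ 2) :=
        neg_le_neg (mul_le_mul_of_nonneg_left (hvar u hu) (inv_nonneg.2 (norm_nonneg u₀)))
    _ = -‖u₀‖ := by rw [sq, ← mul_assoc, inv_mul_mul_self]

end SupportFunction

/-- For a nonempty closed convex set `C`,
`inf_{‖d‖ ≤ 1} σ_C(d) = −min_{u ∈ C} ‖u‖`, where `σ_C` is the support function
of `C` (valued in `EReal`), and the minimum on the right-hand side is attained. -/
theorem stmt_13 {E : Type*}
    [NormedAddCommGroup E] [InnerProductSpace ℝ E] [FiniteDimensional ℝ E]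
    (C : Set E) (hCne : C.Nonempty) (hCcl : IsClosed C) (hCconv : Convex ℝ C) :
    ∃ u₀ ∈ C, (∀ u ∈ C, ‖u₀‖ ≤ ‖u‖) ∧
      (⨅ d ∈ Metric.closedBall (0 : E) 1, ⨆ u ∈ C, ((⟪u, d⟫ : ℝ) : EReal)) =
        ((-‖u₀‖ : ℝ) : EReal) := by
  obtain ⟨u₀, hu₀, hvar⟩ := exists_mem_sq_norm_le_inner_of_isComplete hCne hCcl.isComplete hCconv
  exact ⟨u₀, hu₀, fun u hu => norm_le_of_sq_norm_le_inner (hvar u hu),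
    le_antisymm (iInf_closedBall_iSup_inner_le_neg_norm hvar)
      (neg_norm_le_iInf_closedBall_iSup_inner hu₀)⟩
end

section
/- Let h : Z → (-∞, ∞] be a convex function on a finite-dimensional real inner product space whose domain Z₀ := dom h is bounded with diameter D, and suppose h is K-Lipschitz continuous on Z₀. Let u, z ∈ Z₀, δ ≥ 0, and ξ ∈ ∂_δ h(z). Then ‖ξ‖ · dist(u, ∂Z₀) ≤ (dist(u, ∂Z₀) + ‖z − u‖)·K + ⟨ξ, z − u⟩ + δ, where ∂Z₀ denotes the topological boundary of Z₀. -/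
open scoped RealInnerProductSpace

open Metric Set

/-!
Comparing the δ-subgradient inequality at a point `y` of the domain with the Lipschitz bound
between `y` and `z` gives `⟪ξ, y - u⟫ ≤ ‖y - u‖ K + C` with `C = ‖z - u‖ K + ⟪ξ, z - u⟫ + δ`.
The open ball around `u` of radius `r = dist(u, ∂Z₀)` is connected and misses `∂Z₀`, so it lies
in `Z₀`; testing with `y = u + t ξ / ‖ξ‖` for `t < r` and letting `t → r` gives `‖ξ‖ r ≤ r K + C`.
-/

theorem IsPreconnected.subset_of_disjoint_frontier {X : Type*} [TopologicalSpace X]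
    {s t : Set X} (ht : IsPreconnected t) (hts : (t ∩ s).Nonempty)
    (hfr : Disjoint t (frontier s)) : t ⊆ s := by
  have hcover : t ⊆ interior s ∪ (closure s)ᶜ := fun x hx => by
    by_cases hxc : x ∈ closure s
    · rw [closure_eq_interior_union_frontier] at hxc
      exact Or.inl (hxc.resolve_right (hfr.notMem_of_mem_left hx))
    · exact Or.inr hxc
  obtain ⟨x, hxt, hxs⟩ := hts
  have hint : (t ∩ interior s).Nonempty :=
    ⟨x, hxt, (hcover hxt).resolve_right (not_not.2 (subset_closure hxs))⟩
  have hdisj : Disjoint (interior s) (closure s)ᶜ :=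
    disjoint_compl_right.mono_left (interior_subset.trans subset_closure)
  exact (ht.subset_left_of_subset_union isOpen_interior isClosed_closure.isOpen_compl hdisj
    hcover hint).trans interior_subset

theorem Metric.ball_infDist_frontier_subset {E : Type*} [SeminormedAddCommGroup E]
    [NormedSpace ℝ E] {s : Set E} {u : E} (hu : u ∈ s) :
    ball u (infDist u (frontier s)) ⊆ s := by
  rcases (infDist_nonneg (x := u) (s := frontier s)).eq_or_lt with h0 | hpos
  · simp [← h0]
  exact (convex_ball u _).isPreconnected.subset_of_disjoint_frontier
    ⟨u, mem_ball_self hpos, hu⟩ disjoint_ball_infDist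

section InnerProductSpace

variable {E : Type*} [NormedAddCommGroup E] [InnerProductSpace ℝ E]

theorem inner_sub_le_of_approx_subgradient_of_lipschitz {f : E → ℝ} {ξ u y z : E} {K δ : ℝ}
    (hK : 0 ≤ K) (hlip : f y - f z ≤ K * ‖y - z‖) (hξ : f z + (⟪ξ, y - z⟫ - δ) ≤ f y) :
    ⟪ξ, y - u⟫ ≤ ‖y - u‖ * K + (‖z - u‖ * K + ⟪ξ, z - u⟫ + δ) := by
  have htri : ‖y - z‖ ≤ ‖y - u‖ + ‖z - u‖ := by
    simpa only [sub_sub_sub_cancel_right] using norm_sub_le (y - u) (z - u)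
  have hsplit : ⟪ξ, y - u⟫ = ⟪ξ, y - z⟫ + ⟪ξ, z - u⟫ := by
    rw [← inner_add_right, sub_add_sub_cancel]
  nlinarith [mul_le_mul_of_nonneg_left htri hK]

theorem norm_mul_le_of_inner_sub_le_on_closedBall {ξ u : E} {t K C : ℝ} (hK : 0 ≤ K)
    (ht : 0 ≤ t) (hC : 0 ≤ C) (hbound : ∀ y ∈ closedBall u t, ⟪ξ, y - u⟫ ≤ ‖y - u‖ * K + C) :
    ‖ξ‖ * t ≤ t * K + C := by
  rcases eq_or_ne ξ 0 with rfl | hξ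
  · simpa using add_nonneg (mul_nonneg ht hK) hC
  have hξpos : 0 < ‖ξ‖ := norm_pos_iff.2 hξ
  set x := (t / ‖ξ‖) • ξ
  have hx : ‖x‖ = t := by
    rw [norm_smul, Real.norm_of_nonneg (div_nonneg ht hξpos.le), div_mul_cancel₀ _ hξpos.ne']
  have hinner : ⟪ξ, x⟫ = ‖ξ‖ * t := by
    rw [real_inner_smul_right, real_inner_self_eq_norm_sq]
    field_simp
  simpa [hx, hinner] using hbound (u + x) (by simp [mem_closedBall, dist_eq_norm, hx])

theorem norm_mul_le_of_inner_sub_le_on_ball {ξ u : E} {r K C : ℝ} (hK : 0 ≤ K) (hr : 0 ≤ r)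
    (hC : 0 ≤ C) (hbound : ∀ y ∈ ball u r, ⟪ξ, y - u⟫ ≤ ‖y - u‖ * K + C) :
    ‖ξ‖ * r ≤ r * K + C := by
  rcases hr.eq_or_lt with rfl | hrpos
  · simpa using hC
  have hIco : Ico 0 r ⊆ {t | ‖ξ‖ * t ≤ t * K + C} := fun t ht =>
    norm_mul_le_of_inner_sub_le_on_closedBall hK ht.1 hC
      fun y hy => hbound y (closedBall_subset_ball ht.2 hy)
  have hclosed : IsClosed {t : ℝ | ‖ξ‖ * t ≤ t * K + C} :=
    isClosed_le (by fun_prop) (by fun_prop)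
  have hr_mem : r ∈ closure (Ico 0 r) := by
    rw [closure_Ico hrpos.ne]
    exact right_mem_Icc.2 hr
  exact hclosed.closure_subset_iff.2 hIco hr_mem

end InnerProductSpace

theorem stmt_14_general {E : Type*}
    [NormedAddCommGroup E] [InnerProductSpace ℝ E]
    (h : E → EReal) (hbot : ∀ x, h x ≠ ⊥)
    (Z₀ : Set E) (hZ₀ : Z₀ = {x : E | h x ≠ ⊤})
    (K : ℝ) (hK : 0 ≤ K)
    (hlip : ∀ x ∈ Z₀, ∀ y ∈ Z₀, |(h x).toReal - (h y).toReal| ≤ K * ‖x - y‖)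
    (u z : E) (hu : u ∈ Z₀) (hz : z ∈ Z₀)
    (δ : ℝ) (ξ : E)
    (hξ : ∀ y, h z + ((⟪ξ, y - z⟫ - δ : ℝ) : EReal) ≤ h y) :
    ‖ξ‖ * Metric.infDist u (frontier Z₀) ≤
      (Metric.infDist u (frontier Z₀) + ‖z - u‖) * K + ⟪ξ, z - u⟫ + δ := by
  have hreal : ∀ x ∈ Z₀, h x = ((h x).toReal : EReal) := fun x hx =>
    (EReal.coe_toReal (by rwa [hZ₀] at hx) (hbot x)).symm
  have hsub : ∀ y ∈ Z₀, (h z).toReal + (⟪ξ, y - z⟫ - δ) ≤ (h y).toReal := fun y hy => by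
    have := hξ y
    rwa [hreal z hz, hreal y hy, ← EReal.coe_add, EReal.coe_le_coe_iff] at this
  have hbound : ∀ y ∈ Z₀, ⟪ξ, y - u⟫ ≤ ‖y - u‖ * K + (‖z - u‖ * K + ⟪ξ, z - u⟫ + δ) :=
    fun y hy => inner_sub_le_of_approx_subgradient_of_lipschitz (f := fun x => (h x).toReal) hK
      (le_of_abs_le (hlip y hy z hz)) (hsub y hy)
  have hC : 0 ≤ ‖z - u‖ * K + ⟪ξ, z - u⟫ + δ := by simpa using hbound u hu
  have := norm_mul_le_of_inner_sub_le_on_ball hK infDist_nonneg hC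
    fun y hy => hbound y (ball_infDist_frontier_subset hu hy)
  linarith

/-- Bound on approximate subgradients of a Lipschitz convex function with bounded
domain, in terms of the distance to the boundary of the domain. -/
theorem stmt_14 {E : Type*}
    [NormedAddCommGroup E] [InnerProductSpace ℝ E] [FiniteDimensional ℝ E]
    (h : E → EReal) (hbot : ∀ x, h x ≠ ⊥)
    (hconv : ∀ x y : E, ∀ t : ℝ, 0 ≤ t → t ≤ 1 →
      h (t • x + (1 - t) • y) ≤ (t : EReal) * h x + ((1 - t : ℝ) : EReal) * h y)
    (Z₀ : Set E) (hZ₀ : Z₀ = {x : E | h x ≠ ⊤}) (hZ₀ne : Z₀.Nonempty)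
    (hbdd : Bornology.IsBounded Z₀)
    (D : ℝ) (hD : ∀ x ∈ Z₀, ∀ y ∈ Z₀, dist x y ≤ D)
    (K : ℝ) (hK : 0 ≤ K)
    (hlip : ∀ x ∈ Z₀, ∀ y ∈ Z₀, |(h x).toReal - (h y).toReal| ≤ K * ‖x - y‖)
    (u z : E) (hu : u ∈ Z₀) (hz : z ∈ Z₀)
    (δ : ℝ) (hδ : 0 ≤ δ) (ξ : E)
    (hξ : ∀ y, h z + ((⟪ξ, y - z⟫ - δ : ℝ) : EReal) ≤ h y) :
    ‖ξ‖ * Metric.infDist u (frontier Z₀) ≤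
      (Metric.infDist u (frontier Z₀) + ‖z - u‖) * K + ⟪ξ, z - u⟫ + δ :=
  stmt_14_general h hbot Z₀ hZ₀ K hK hlip u z hu hz δ ξ hξ
end

section
/- Let Ψ(x, y) be a real-valued function on X × Y, where X is a convex subset of a finite-dimensional real inner product space and Y is a nonempty compact convex subset of another. Assume: (i) for each x ∈ X, −Ψ(x, ·) is μ-strongly convex on Y for some μ > 0; (ii) for all x, x' ∈ X and y ∈ Y, Ψ(x, y) − Ψ(x', y) − ⟨∇_x Ψ(x', y), x − x'⟩ ≥ −(m/2)‖x − x'‖²; and (iii) ‖∇_x Ψ(x, y) − ∇_x Ψ(x', y')‖ ≤ L_x‖x − x'‖ + L_y‖y − y'‖ for all x, x' ∈ X, y, y' ∈ Y, with m ≤ L_x. Then the map y(x) := argmax_{y∈Y} Ψ(x, y) is well-defined and Q_μ-Lipschitz continuous on X with Q_μ := L_y/μ + √((L_x + m)/μ). -/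
/-!
If `y` maximizes a `μ`-strongly concave function on a convex set, moving from `y` towards any
`z` shows the quadratic growth `f z + μ/2 ‖z - y‖² ≤ f y`; this gives uniqueness of the argmax.
For maximizers `y, y'` of `Ψ x, Ψ x'` the two growth inequalities add up to
`μ r² ≤ (Ψ x y - Ψ x' y) - (Ψ x y' - Ψ x' y')` with `r = ‖y - y'‖`. Both brackets are compared
with linearizations by the weak convexity bound, and the gradient difference is controlled by its
Lipschitz bound, giving `μ r² ≤ L_y r D + (L_x + m) D²` with `D = ‖x - x'‖`. Solving this
quadratic inequality in `r` yields the Lipschitz constant `L_y/μ + √((L_x + m)/μ)`.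
-/

open scoped RealInnerProductSpace
open Filter Topology

lemma le_mul_sqrt_div_sq (c : ℝ) {μ : ℝ} (hμ : 0 < μ) : c ≤ μ * √(c / μ) ^ 2 := by
  rw [Real.sq_sqrt', ← div_le_iff₀' hμ]
  exact le_max_left _ _

lemma le_of_mul_sq_le_mul_add {μ L c r D : ℝ} (hμ : 0 < μ) (hL : 0 ≤ L)
    (hD : 0 ≤ D) (h : μ * r ^ 2 ≤ L * r * D + c * D ^ 2) : r ≤ (L / μ + √(c / μ)) * D := by
  set s := √(c / μ)
  rcases le_or_gt r (s * D) with hsD | hsD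
  · have : 0 ≤ L / μ * D := by positivity
    linarith [add_mul (L / μ) s D]
  have hrpos : 0 < r := hsD.trans_le' (by positivity)
  -- Past the root `s D`: `c D² ≤ μ s² D² ≤ μ s D r`, so `h` can be divided by `r`.
  have hmr : μ * r * r ≤ (L * D + μ * s * D) * r := by
    nlinarith [mul_le_mul_of_nonneg_right (le_mul_sqrt_div_sq c hμ) (sq_nonneg D),
      mul_le_mul_of_nonneg_left hsD.le (by positivity : 0 ≤ μ * (s * D))]
  have hμr : μ * r ≤ μ * ((L / μ + s) * D) :=
    calc μ * r ≤ L * D + μ * s * D := le_of_mul_le_mul_right hmr hrpos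
      _ = μ * ((L / μ + s) * D) := by field_simp
  exact le_of_mul_le_mul_left hμr hμ

section StrongConcave

variable {F : Type*} [NormedAddCommGroup F] [NormedSpace ℝ F]

lemma strongConcaveOn_of_forall {Y : Set F} (hY : Convex ℝ Y) {f : F → ℝ} {μ : ℝ}
    (h : ∀ y₁ ∈ Y, ∀ y₂ ∈ Y, ∀ t : ℝ, 0 ≤ t → t ≤ 1 →
      t * f y₁ + (1 - t) * f y₂ + μ / 2 * t * (1 - t) * ‖y₁ - y₂‖ ^ 2 ≤
        f (t • y₁ + (1 - t) • y₂)) :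
    StrongConcaveOn Y μ f := by
  refine ⟨hY, fun y₁ hy₁ y₂ hy₂ a b ha hb hab => ?_⟩
  obtain rfl : b = 1 - a := by linarith
  have := h y₁ hy₁ y₂ hy₂ a ha (by linarith)
  simp only [smul_eq_mul]
  linarith

lemma StrongConcaveOn.add_sq_le_of_isMaxOn {Y : Set F} {f : F → ℝ} {μ : ℝ}
    (hf : StrongConcaveOn Y μ f) {y z : F} (hy : y ∈ Y) (hmax : IsMaxOn f Y y) (hz : z ∈ Y) :
    f z + μ / 2 * ‖z - y‖ ^ 2 ≤ f y := by
  have hstep : ∀ t : ℝ, 0 < t → t ≤ 1 → f z + μ / 2 * (1 - t) * ‖z - y‖ ^ 2 ≤ f y := by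
    intro t ht0 ht1
    have hconc := hf.2 hz hy ht0.le (sub_nonneg.mpr ht1) (add_sub_cancel t 1)
    have hle : f (t • z + (1 - t) • y) ≤ f y := hmax (hf.1 hz hy ht0.le (by linarith) (by ring))
    simp only [smul_eq_mul] at hconc
    have : t * (f z + μ / 2 * (1 - t) * ‖z - y‖ ^ 2) ≤ t * f y := by nlinarith
    exact le_of_mul_le_mul_left this ht0
  have hlim : Tendsto (fun t : ℝ => f z + μ / 2 * (1 - t) * ‖z - y‖ ^ 2) (𝓝[>] 0)
      (𝓝 (f z + μ / 2 * (1 - 0) * ‖z - y‖ ^ 2)) :=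
    (by fun_prop : Continuous fun t : ℝ => f z + μ / 2 * (1 - t) * ‖z - y‖ ^ 2).continuousWithinAt
  have hev : ∀ᶠ t in 𝓝[>] (0 : ℝ), f z + μ / 2 * (1 - t) * ‖z - y‖ ^ 2 ≤ f y := by
    filter_upwards [Ioc_mem_nhdsGT zero_lt_one] with t ht using hstep t ht.1 ht.2
  simpa using le_of_tendsto hlim hev

lemma StrongConcaveOn.eq_of_isMaxOn {Y : Set F} {f : F → ℝ} {μ : ℝ} (hf : StrongConcaveOn Y μ f)
    (hμ : 0 < μ) {y z : F} (hy : y ∈ Y) (hz : z ∈ Y) (hmaxy : IsMaxOn f Y y)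
    (hmaxz : IsMaxOn f Y z) : z = y := by
  have hgrowth := hf.add_sq_le_of_isMaxOn hy hmaxy hz
  have hyz : f y ≤ f z := hmaxz hy
  have : ‖z - y‖ ^ 2 ≤ 0 := by nlinarith
  simpa [sub_eq_zero] using (pow_eq_zero_iff two_ne_zero).mp (this.antisymm (sq_nonneg _))

end StrongConcave

section ArgmaxLipschitz

variable {E F : Type*} [NormedAddCommGroup E] [InnerProductSpace ℝ E]
  [NormedAddCommGroup F] [NormedSpace ℝ F]

lemma mul_sq_norm_sub_le_of_isMaxOn {X : Set E} {Y : Set F} {Ψ : E → F → ℝ} {Gx : E → F → E}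
    {μ m Lx Ly : ℝ} (hsc : ∀ x ∈ X, StrongConcaveOn Y μ (Ψ x))
    (hcurv : ∀ x ∈ X, ∀ x' ∈ X, ∀ y ∈ Y,
      -(m / 2) * ‖x - x'‖ ^ 2 ≤ Ψ x y - Ψ x' y - ⟪Gx x' y, x - x'⟫)
    (hlip : ∀ x ∈ X, ∀ x' ∈ X, ∀ y ∈ Y, ∀ y' ∈ Y,
      ‖Gx x y - Gx x' y'‖ ≤ Lx * ‖x - x'‖ + Ly * ‖y - y'‖)
    {x x' : E} (hx : x ∈ X) (hx' : x' ∈ X) {y y' : F} (hy : y ∈ Y) (hy' : y' ∈ Y)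
    (hmax : IsMaxOn (Ψ x) Y y) (hmax' : IsMaxOn (Ψ x') Y y') :
    μ * ‖y - y'‖ ^ 2 ≤ Ly * ‖y - y'‖ * ‖x - x'‖ + (Lx + m) * ‖x - x'‖ ^ 2 := by
  have hgrowth := (hsc x hx).add_sq_le_of_isMaxOn hy hmax hy'
  have hgrowth' := (hsc x' hx').add_sq_le_of_isMaxOn hy' hmax' hy
  rw [norm_sub_rev y' y] at hgrowth
  have hcurv₁ := hcurv x' hx' x hx y hy
  have hcurv₂ := hcurv x hx x' hx' y' hy'
  rw [norm_sub_rev x' x, ← neg_sub x x', inner_neg_right] at hcurv₁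
  have hinner : ⟪Gx x y - Gx x' y', x - x'⟫ ≤ (Lx * ‖x - x'‖ + Ly * ‖y - y'‖) * ‖x - x'‖ :=
    (real_inner_le_norm _ _).trans
      (mul_le_mul_of_nonneg_right (hlip x hx x' hx' y hy y' hy') (norm_nonneg _))
  rw [inner_sub_left] at hinner
  nlinarith

end ArgmaxLipschitz

theorem stmt_19_general {E F : Type*}
    [NormedAddCommGroup E] [InnerProductSpace ℝ E]
    [NormedAddCommGroup F] [InnerProductSpace ℝ F]
    (X : Set E)
    (Y : Set F) (hYne : Y.Nonempty) (hYcomp : IsCompact Y) (hYconv : Convex ℝ Y)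
    (Ψ : E → F → ℝ) (Gx : E → F → E)
    (hcont : ∀ x ∈ X, ContinuousOn (fun y => Ψ x y) Y)
    (μ m Lx Ly : ℝ) (hμ : 0 < μ) (hLy : 0 < Ly)
    (hsc : ∀ x ∈ X, ∀ y₁ ∈ Y, ∀ y₂ ∈ Y, ∀ t : ℝ, 0 ≤ t → t ≤ 1 →
      t * Ψ x y₁ + (1 - t) * Ψ x y₂ + μ / 2 * t * (1 - t) * ‖y₁ - y₂‖ ^ 2 ≤
        Ψ x (t • y₁ + (1 - t) • y₂))
    (hcurv : ∀ x ∈ X, ∀ x' ∈ X, ∀ y ∈ Y,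
      -(m / 2) * ‖x - x'‖ ^ 2 ≤ Ψ x y - Ψ x' y - ⟪Gx x' y, x - x'⟫)
    (hlip : ∀ x ∈ X, ∀ x' ∈ X, ∀ y ∈ Y, ∀ y' ∈ Y,
      ‖Gx x y - Gx x' y'‖ ≤ Lx * ‖x - x'‖ + Ly * ‖y - y'‖) :
    (∀ x ∈ X, ∃! y, y ∈ Y ∧ ∀ y' ∈ Y, Ψ x y' ≤ Ψ x y) ∧
      ∀ ymap : E → F,
        (∀ x ∈ X, ymap x ∈ Y ∧ ∀ y' ∈ Y, Ψ x y' ≤ Ψ x (ymap x)) →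
        ∀ x ∈ X, ∀ x' ∈ X,
          ‖ymap x - ymap x'‖ ≤
            (Ly / μ + Real.sqrt ((Lx + m) / μ)) * ‖x - x'‖ := by
  have hconc : ∀ x ∈ X, StrongConcaveOn Y μ (Ψ x) := fun x hx =>
    strongConcaveOn_of_forall hYconv (hsc x hx)
  refine ⟨fun x hx => ?_, fun ymap hmap x hx x' hx' => ?_⟩
  · obtain ⟨y, hy, hmax⟩ := hYcomp.exists_isMaxOn hYne (hcont x hx)
    exact ⟨y, ⟨hy, hmax⟩, fun z ⟨hz, hmaxz⟩ => (hconc x hx).eq_of_isMaxOn hμ hy hz hmax hmaxz⟩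
  · obtain ⟨hy, hmax⟩ := hmap x hx
    obtain ⟨hy', hmax'⟩ := hmap x' hx'
    exact le_of_mul_sq_le_mul_add hμ hLy.le (norm_nonneg _)
      (mul_sq_norm_sub_le_of_isMaxOn hconc hcurv hlip hx hx' hy hy' hmax hmax')

/-- Lipschitz continuity of the argmax map `y(x) = argmax_{y ∈ Y} Ψ(x, y)` for a
weakly convex–strongly concave saddle function with Lipschitz partial gradient
in `x`: the argmax is well-defined (exists and is unique) and the map is
`Q_μ`-Lipschitz with `Q_μ = L_y/μ + √((L_x + m)/μ)`. -/
theorem stmt_19 {E F : Type*}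
    [NormedAddCommGroup E] [InnerProductSpace ℝ E] [FiniteDimensional ℝ E]
    [NormedAddCommGroup F] [InnerProductSpace ℝ F] [FiniteDimensional ℝ F]
    (X : Set E) (hX : Convex ℝ X)
    (Y : Set F) (hYne : Y.Nonempty) (hYcomp : IsCompact Y) (hYconv : Convex ℝ Y)
    (Ψ : E → F → ℝ) (Gx : E → F → E)
    (hcont : ∀ x ∈ X, ContinuousOn (fun y => Ψ x y) Y)
    (μ m Lx Ly : ℝ) (hμ : 0 < μ) (hLx : 0 < Lx) (hLy : 0 < Ly)
    (hm : 0 < m) (hmLx : m ≤ Lx)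
    (hsc : ∀ x ∈ X, ∀ y₁ ∈ Y, ∀ y₂ ∈ Y, ∀ t : ℝ, 0 ≤ t → t ≤ 1 →
      t * Ψ x y₁ + (1 - t) * Ψ x y₂ + μ / 2 * t * (1 - t) * ‖y₁ - y₂‖ ^ 2 ≤
        Ψ x (t • y₁ + (1 - t) • y₂))
    (hcurv : ∀ x ∈ X, ∀ x' ∈ X, ∀ y ∈ Y,
      -(m / 2) * ‖x - x'‖ ^ 2 ≤ Ψ x y - Ψ x' y - ⟪Gx x' y, x - x'⟫)
    (hlip : ∀ x ∈ X, ∀ x' ∈ X, ∀ y ∈ Y, ∀ y' ∈ Y,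
      ‖Gx x y - Gx x' y'‖ ≤ Lx * ‖x - x'‖ + Ly * ‖y - y'‖) :
    (∀ x ∈ X, ∃! y, y ∈ Y ∧ ∀ y' ∈ Y, Ψ x y' ≤ Ψ x y) ∧
      ∀ ymap : E → F,
        (∀ x ∈ X, ymap x ∈ Y ∧ ∀ y' ∈ Y, Ψ x y' ≤ Ψ x (ymap x)) →
        ∀ x ∈ X, ∀ x' ∈ X,
          ‖ymap x - ymap x'‖ ≤
            (Ly / μ + Real.sqrt ((Lx + m) / μ)) * ‖x - x'‖ :=
  stmt_19_general X Y hYne hYcomp hYconv Ψ Gx hcont μ m Lx Ly hμ hLy hsc hcurv hlip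
end
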